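/- arXiv:2101.08191 — 3 statements merged into one kernel-verified Lean document; each statement's English description precedes it below -/
import Mathlib

section
/- For every positive integer M, the number W(M) of squarefree divisors of M satisfies W(M) < 4515 · M^{1/8}. -/
set_option maxRecDepth 10000
set_option maxHeartbeats 1000000

/-- The set of primes below 256. -/
def sp : Finset ℕ := {2, 3, 5, 7, 11, 13, 17, 19, 23, 29, 31, 37, 41, 43, 47, 53, 59, 61, 67, 71, 73, 79, 83, 89, 97, 101, 103, 107, 109, 113, 127, 131, 137, 139, 149, 151, 157, 163, 167, 173, 179, 181, 191, 193, 197, 199, 211, 223, 227, 229, 233, 239, 241, 251}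

lemma sp_card : sp.card = 54 := by decide
lemma sp_le : ∀ p ∈ sp, p ≤ 256 := by decide
lemma sp_mem : ∀ p < 256, p.Prime → p ∈ sp := by decide
lemma sp_prod : ∏ p ∈ sp, p = 64266330917908644872330635228106713310880186591609208114244758680898150367880703152525200743234420230 := by decide

lemma sp_key : 256 ^ 54 < 4515 ^ 8 * ∏ p ∈ sp, p := by
  rw [sp_prod]; norm_num

lemma lemA (T : Finset ℕ) (hT : T ⊆ sp) :
    256 ^ T.card * ∏ p ∈ sp, p ≤ 256 ^ 54 * ∏ p ∈ T, p := by
  have hcard : T.card ≤ 54 := sp_card ▸ Finset.card_le_card hT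
  have hsd : (∏ p ∈ sp \ T, p) * ∏ p ∈ T, p = ∏ p ∈ sp, p :=
    Finset.prod_sdiff hT
  have hle : (∏ p ∈ sp \ T, p) ≤ 256 ^ (sp \ T).card :=
    Finset.prod_le_pow_card _ _ _ (fun p hp => sp_le p (Finset.mem_sdiff.mp hp).1)
  have hcsd : (sp \ T).card = 54 - T.card := by
    rw [Finset.card_sdiff_of_subset hT, sp_card]
  calc 256 ^ T.card * ∏ p ∈ sp, p
      = 256 ^ T.card * ((∏ p ∈ sp \ T, p) * ∏ p ∈ T, p) := by rw [hsd]
    _ ≤ 256 ^ T.card * (256 ^ (54 - T.card) * ∏ p ∈ T, p) := by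
        rw [hcsd] at hle
        exact Nat.mul_le_mul_left _ (Nat.mul_le_mul_right _ hle)
    _ = 256 ^ 54 * ∏ p ∈ T, p := by
        rw [← mul_assoc, ← pow_add, Nat.add_sub_cancel' hcard]

/-- For every positive integer `M`, the number `W(M) = 2^{ω(M)}` of squarefree divisors of `M`
satisfies `W(M) < 4515 · M^{1/8}`. -/
theorem squarefree_divisor_count_lt (M : ℕ) (hM : 0 < M) :
    (2 : ℝ) ^ M.primeFactors.card < 4515 * (M : ℝ) ^ ((1 : ℝ) / 8) := by
  set S := M.primeFactors with hS
  set T := S.filter (· < 256) with hTdef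
  set U := S.filter (fun p => ¬ p < 256) with hUdef
  have hcards : T.card + U.card = S.card := Finset.card_filter_add_card_filter_not _
  have hprods : (∏ p ∈ T, p) * ∏ p ∈ U, p = ∏ p ∈ S, p :=
    Finset.prod_filter_mul_prod_filter_not _ _ _
  have hTsub : T ⊆ sp := by
    intro p hp
    rw [hTdef, Finset.mem_filter] at hp
    exact sp_mem p hp.2 (Nat.prime_of_mem_primeFactors hp.1)
  have hU : 256 ^ U.card ≤ ∏ p ∈ U, p := by
    apply Finset.pow_card_le_prod
    intro p hp
    rw [hUdef, Finset.mem_filter] at hp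
    omega
  have hdvd : (∏ p ∈ S, p) ≤ M := Nat.le_of_dvd hM (Nat.prod_primeFactors_dvd M)
  have hPpos : 0 < ∏ p ∈ sp, p := by rw [sp_prod]; norm_num
  -- key natural number inequality
  have key : 2 ^ (8 * S.card) < 4515 ^ 8 * M := by
    have h1 : 2 ^ (8 * S.card) * ∏ p ∈ sp, p ≤ 256 ^ 54 * M := by
      calc 2 ^ (8 * S.card) * ∏ p ∈ sp, p
          = (256 ^ T.card * ∏ p ∈ sp, p) * 256 ^ U.card := by
            rw [show (256 : ℕ) = 2 ^ 8 by norm_num, ← pow_mul, ← pow_mul, ← hcards]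
            ring
        _ ≤ (256 ^ 54 * ∏ p ∈ T, p) * ∏ p ∈ U, p :=
            Nat.mul_le_mul (lemA T hTsub) hU
        _ = 256 ^ 54 * ∏ p ∈ S, p := by rw [mul_assoc, hprods]
        _ ≤ 256 ^ 54 * M := Nat.mul_le_mul_left _ hdvd
    have h2 : 256 ^ 54 * M < (4515 ^ 8 * M) * ∏ p ∈ sp, p := by
      calc 256 ^ 54 * M < (4515 ^ 8 * ∏ p ∈ sp, p) * M :=
            (Nat.mul_lt_mul_right hM).mpr sp_key
        _ = (4515 ^ 8 * M) * ∏ p ∈ sp, p := by ring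
    have := lt_of_le_of_lt h1 h2
    exact Nat.lt_of_mul_lt_mul_right this
  -- move to ℝ
  have hMpos : (0 : ℝ) < M := Nat.cast_pos.mpr hM
  have hrpow : ((M : ℝ) ^ ((1 : ℝ) / 8)) ^ (8 : ℕ) = (M : ℝ) := by
    rw [← Real.rpow_natCast ((M : ℝ) ^ ((1 : ℝ) / 8)) 8, ← Real.rpow_mul hMpos.le]
    norm_num
  have hpos : (0 : ℝ) ≤ 4515 * (M : ℝ) ^ ((1 : ℝ) / 8) := by
    positivity
  refine lt_of_pow_lt_pow_left₀ 8 hpos ?_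
  rw [mul_pow, hrpow, ← pow_mul]
  calc (2 : ℝ) ^ (S.card * 8) = ((2 ^ (8 * S.card) : ℕ) : ℝ) := by
        push_cast; ring_nf
    _ < ((4515 ^ 8 * M : ℕ) : ℝ) := by exact_mod_cast key
    _ = 4515 ^ 8 * (M : ℝ) := by push_cast; ring
end

section
/- Let q be a prime power, m ≥ 3, and let u, v ∈ F_{q^m}. If the rational function vx + u x^{−1} over F_{q^m} can be written as r(x)^{q^m} − r(x) for some rational function r(x) ∈ F_{q^m}(x), then u = v = 0. -/
open Polynomial

/-- Uniqueness of numerator and denominator for a coprime monic representation. -/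
lemma ratFunc_num_denom_unique {K : Type*} [Field K] {p q : K[X]} (hq : q.Monic)
    (hpq : IsCoprime p q) {s : RatFunc K}
    (hs : s = algebraMap K[X] (RatFunc K) p / algebraMap K[X] (RatFunc K) q) :
    s.num = p ∧ s.denom = q := by
  have h : s.num * q = p * s.denom := (RatFunc.num_mul_eq_mul_denom_iff hq.ne_zero).mpr hs
  have h2 : s.denom ∣ q := (RatFunc.denom_dvd hq.ne_zero).mpr ⟨p, hs⟩
  have h3 : q ∣ s.denom := hpq.symm.dvd_of_dvd_mul_left ⟨s.num, by rw [← h]; ring⟩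
  have hd : s.denom = q :=
    Polynomial.eq_of_monic_of_associated (s.monic_denom) hq (associated_of_dvd_dvd h2 h3)
  refine ⟨?_, hd⟩
  rw [hd] at h
  exact mul_right_cancel₀ hq.ne_zero h

/-- If the rational function `v·x + u·x⁻¹` over `F_{q^m}` can be written as
`r(x)^{q^m} − r(x)` for some rational function `r`, then `u = v = 0`. -/
theorem rational_artin_schreier_form {F : Type*} [Field F] [Fintype F]
    (q m : ℕ) (p k : ℕ) (hp : p.Prime) (hq : q = p ^ k) (hk : 0 < k) (hm : 3 ≤ m)
    (hF : Fintype.card F = q ^ m) (u v : F)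
    (h : ∃ r : RatFunc F,
      RatFunc.C v * RatFunc.X + RatFunc.C u * (RatFunc.X)⁻¹ = r ^ (q ^ m) - r) :
    u = 0 ∧ v = 0 := by
  obtain ⟨r, hr⟩ := h
  -- basic size facts
  have hq2 : 2 ≤ q := by
    rw [hq]
    calc 2 ≤ p := hp.two_le
    _ ≤ p ^ k := Nat.le_self_pow hk.ne' p
  have hQ2 : 2 ≤ q ^ m := le_trans hq2 (Nat.le_self_pow (by omega) q)
  obtain ⟨Q', hQ'⟩ : ∃ Q', q ^ m = Q' + 2 := ⟨q ^ m - 2, by omega⟩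
  set n := r.num with hn
  set d := r.denom with hdd
  have hd0 : (algebraMap F[X] (RatFunc F)) d ≠ 0 :=
    RatFunc.algebraMap_ne_zero r.denom_ne_zero
  -- express r^Q - r as a coprime fraction
  have key : r ^ (q ^ m) - r =
      algebraMap F[X] (RatFunc F) (n ^ (q ^ m) - n * d ^ (q ^ m - 1)) /
        algebraMap F[X] (RatFunc F) (d ^ (q ^ m)) := by
    have hrnd : r = algebraMap F[X] (RatFunc F) n / algebraMap F[X] (RatFunc F) d :=
      (RatFunc.num_div_denom r).symm
    rw [hrnd]
    rw [hQ']
    rw [show Q' + 2 - 1 = Q' + 1 from by omega]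
    push_cast [map_sub, map_mul, map_pow]
    rw [div_pow]
    field_simp
    ring
  have hcop : IsCoprime (n ^ (q ^ m) - n * d ^ (q ^ m - 1)) (d ^ (q ^ m)) := by
    have hnd := r.isCoprime_num_denom
    have h1 : IsCoprime (n ^ (q ^ m) - n * d ^ (q ^ m - 1)) d := by
      have h2 : IsCoprime (n ^ (q ^ m)) d := hnd.pow_left
      have h3 := h2.add_mul_left_left (-(n * d ^ Q'))
      have he : n ^ (q ^ m) + d * -(n * d ^ Q') = n ^ (q ^ m) - n * d ^ (q ^ m - 1) := by
        have h4 : q ^ m - 1 = Q' + 1 := by omega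
        rw [h4]; ring
      rwa [he] at h3
    exact h1.pow_right
  have hmonic : (d ^ (q ^ m)).Monic := r.monic_denom.pow _
  have hrhs := ratFunc_num_denom_unique hmonic hcop (hr.trans key)
  -- Step 1: u = 0
  have hu : u = 0 := by
    by_contra hu0
    have hlhs : RatFunc.C v * RatFunc.X + RatFunc.C u * (RatFunc.X)⁻¹ =
        algebraMap F[X] (RatFunc F) (C v * X ^ 2 + C u) / algebraMap F[X] (RatFunc F) X := by
      push_cast [map_add, map_mul, map_pow, RatFunc.algebraMap_C, RatFunc.algebraMap_X]
      rw [eq_div_iff RatFunc.X_ne_zero, add_mul, mul_assoc (RatFunc.C u),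
        inv_mul_cancel₀ RatFunc.X_ne_zero, mul_one]
      ring
    have hcop2 : IsCoprime (C v * X ^ 2 + C u) (X : F[X]) := by
      have hbase : IsCoprime (C u) (X : F[X]) :=
        ⟨C u⁻¹, 0, by simp [← C_mul, inv_mul_cancel₀ hu0]⟩
      have h5 := hbase.add_mul_right_left (C v * X)
      have he : C u + C v * X * X = C v * X ^ 2 + C u := by ring
      rwa [he] at h5
    have hlhs2 := ratFunc_num_denom_unique monic_X hcop2 hlhs
    have hXd : (X : F[X]) = d ^ (q ^ m) := hlhs2.2.symm.trans hrhs.2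
    have hdeg := congrArg natDegree hXd
    rw [natDegree_X, natDegree_pow] at hdeg
    rcases Nat.eq_zero_or_pos d.natDegree with h0 | h1
    · rw [h0, Nat.mul_zero] at hdeg; exact one_ne_zero hdeg
    · nlinarith
  subst hu
  refine ⟨rfl, ?_⟩
  -- Step 2: v = 0
  have hlhs : RatFunc.C v * RatFunc.X + RatFunc.C (0:F) * (RatFunc.X)⁻¹ =
      algebraMap F[X] (RatFunc F) (C v * X) / algebraMap F[X] (RatFunc F) 1 := by
    push_cast [map_one, map_mul, RatFunc.algebraMap_C, RatFunc.algebraMap_X]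
    simp
  have hlhs2 := ratFunc_num_denom_unique monic_one (isCoprime_one_right) hlhs
  have hd1 : (1 : F[X]) = d ^ (q ^ m) := hlhs2.2.symm.trans hrhs.2
  have hdeq : d = 1 := by
    have hdeg := congrArg natDegree hd1
    rw [natDegree_one, natDegree_pow] at hdeg
    have hd0' : d.natDegree = 0 := by
      rcases Nat.eq_zero_or_pos d.natDegree with h0 | h1
      · exact h0
      · nlinarith
    exact r.monic_denom.natDegree_eq_zero.mp hd0'
  have hnum : C v * X = n ^ (q ^ m) - n := by
    have := hlhs2.1.symm.trans hrhs.1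
    rwa [hdeq, one_pow, mul_one] at this
  rcases Nat.eq_zero_or_pos n.natDegree with h0 | h1
  · obtain ⟨c, hc⟩ := natDegree_eq_zero.mp h0
    have hcQ : c ^ (q ^ m) = c := by
      have := FiniteField.pow_card c
      rwa [hF] at this
    rw [← hc, ← C_pow, hcQ, sub_self] at hnum
    have := congrArg (fun f => Polynomial.coeff f 1) hnum
    simpa using this
  · exfalso
    have hdeg1 : (C v * X).natDegree ≤ 1 := by
      calc (C v * X).natDegree ≤ (C v).natDegree + (X : F[X]).natDegree := natDegree_mul_le
      _ ≤ 1 := by simp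
    have hlt : n.natDegree < (n ^ (q ^ m)).natDegree := by
      rw [natDegree_pow]; nlinarith
    have hdeg2 : (n ^ (q ^ m) - n).natDegree = (q ^ m) * n.natDegree := by
      rw [natDegree_sub_eq_left_of_natDegree_lt hlt, natDegree_pow]
    rw [hnum, hdeg2] at hdeg1
    nlinarith
end

section
/- Fix q a prime power, m ≥ 3, n ∈ ℕ, f a non-exceptional rational function of degree sum n over F_{q^m}, and a ∈ F_q. For divisors l_1, l_2 of q^m − 1 and g of x^m − 1, let N(l_1, l_2, g) denote the number of α ∈ F_{q^m} such that α is l_1-free and g-free, f(α) is l_2-free, and Tr_{F_{q^m}/F_q}(α^{−1}) = a. Let k, P be coprime positive integers with kP | q^m − 1, and g, G be coprime divisors of x^m − 1. If p_1, …, p_r are the prime divisors of P and g_1, …, g_s the monic irreducible factors of G over F_q, then N(kP, kP, gG) ≥ Σ_{i=1}^r N(kp_i, k, g) + Σ_{i=1}^r N(k, kp_i, g) + Σ_{i=1}^s N(k, k, g·g_i) − (2r + s − 1) N(k, k, g). -/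
open Polynomial UniqueFactorizationMonoid Classical

/-- `w ∈ F_{q^m}ˣ` is `u`-free: `w ≠ 0` and `w = v ^ d` with `d` a positive divisor of `u`
implies `d = 1`. -/
def IsUFree {F : Type*} [Field F] (u : ℕ) (w : F) : Prop :=
  w ≠ 0 ∧ ∀ v : F, ∀ d : ℕ, 0 < d → d ∣ u → w = v ^ d → d = 1

/-- The `F_q[x]`-module action on `F_{q^m}`: `f ∘ α = ∑ aᵢ α^{q^i}`. -/
def polyAct {K F : Type*} [Field K] [Field F] [Algebra K F] (q : ℕ)
    (f : K[X]) (α : F) : F :=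
  f.sum fun i a => a • α ^ q ^ i

/-- `α` is `g`-free: `α = h ∘ β` with `h` a monic divisor of `g` implies `h = 1`. -/
def IsGFree {K F : Type*} [Field K] [Field F] [Algebra K F] (q : ℕ)
    (g : K[X]) (α : F) : Prop :=
  ∀ h : K[X], h.Monic → h ∣ g → (∃ β : F, α = polyAct q h β) → h = 1

/-- A rational function `f ∈ F(x)` is exceptional if `f = c·xⁱ·hᵈ` for some `d > 1` dividing
`|F| − 1`, or `f = xⁱ` with `gcd(|F| − 1, i) ≠ 1`. -/
def ExceptionalRatFunc {F : Type*} [Field F] [Fintype F] (f : RatFunc F) : Prop :=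
  (∃ (c : F) (i : ℤ) (h : RatFunc F) (d : ℕ), 1 < d ∧ d ∣ Fintype.card F - 1 ∧
      f = RatFunc.C c * RatFunc.X ^ i * h ^ d) ∨
  (∃ i : ℤ, f = RatFunc.X ^ i ∧ Nat.gcd (Fintype.card F - 1) i.natAbs ≠ 1)

/-- The counting function `N_{f,a,n}(l₁, l₂, g)`. -/
noncomputable def Ncount {K F : Type*} [Field K] [Field F] [Fintype F] [Algebra K F]
    (q : ℕ) (f : RatFunc F) (a : K) (l₁ l₂ : ℕ) (g : K[X]) : ℕ :=
  Nat.card {α : F // IsUFree l₁ α ∧ IsGFree q g α ∧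
    IsUFree l₂ (RatFunc.eval (RingHom.id F) α f) ∧ Algebra.trace K F α⁻¹ = a}

/-- The polynomial analogue `Φ_q(g)` of Euler's totient over `F_q[x]`. -/
noncomputable def polyTotient {K : Type*} [Field K] (g : K[X]) : ℕ :=
  Nat.card (K[X] ⧸ Ideal.span {g})ˣ

section UF

variable {F : Type*} [Field F]

lemma IsUFree.mono {u u' : ℕ} (h : u' ∣ u) {w : F} (hw : IsUFree u w) : IsUFree u' w :=
  ⟨hw.1, fun v d hd hdu => hw.2 v d hd (hdu.trans h)⟩

lemma isUFree_mul_iff {k P : ℕ} (hP : P ≠ 0) {w : F} :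
    IsUFree (k * P) w ↔ IsUFree k w ∧ ∀ c ∈ P.primeFactors, IsUFree (k * c) w := by
  constructor
  · intro h
    exact ⟨h.mono (dvd_mul_right k P),
      fun c hc => h.mono (mul_dvd_mul_left k (Nat.dvd_of_mem_primeFactors hc))⟩
  · rintro ⟨hk, hall⟩
    refine ⟨hk.1, fun v d hd hdvd heq => ?_⟩
    by_contra hne
    obtain ⟨ℓ, hℓ, hℓd⟩ := Nat.exists_prime_and_dvd hne
    obtain ⟨c, rfl⟩ := hℓd
    have heq' : w = (v ^ c) ^ ℓ := by rw [← pow_mul, mul_comm]; exact heq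
    have hℓkP : ℓ ∣ k * P := dvd_trans (dvd_mul_right ℓ c) hdvd
    rcases (Nat.Prime.dvd_mul hℓ).1 hℓkP with h1 | h2
    · exact hℓ.ne_one (hk.2 (v ^ c) ℓ hℓ.pos h1 heq')
    · have hmem : ℓ ∈ P.primeFactors := Nat.mem_primeFactors.2 ⟨hℓ, h2, hP⟩
      exact hℓ.ne_one ((hall ℓ hmem).2 (v ^ c) ℓ hℓ.pos (dvd_mul_left ℓ k) heq')

end UF

section GF

variable {K F : Type*} [Field K] [Field F] [Algebra K F]

lemma IsGFree.mono {q : ℕ} {g g' : K[X]} (hdvd : g' ∣ g) {α : F} (h : IsGFree q g α) :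
    IsGFree q g' α :=
  fun e he hedvd hex => h e he (hedvd.trans hdvd) hex

lemma polyAct_mul [Fintype K] {p t q : ℕ} [Fact p.Prime] [CharP F p]
    (hq : q = p ^ t) (hK : Fintype.card K = q) (h₁ h₂ : K[X]) (α : F) :
    polyAct q (h₁ * h₂) α = polyAct q h₁ (polyAct q h₂ α) := by
  have hcq : ∀ c : K, c ^ q = c := fun c => by rw [← hK]; exact FiniteField.pow_card c
  let φ : F →ₗ[K] F :=
    { toFun := fun x => x ^ q
      map_add' := fun x y => by subst hq; exact add_pow_char_pow x y p t
      map_smul' := fun c x => by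
        simp only [RingHom.id_apply, Algebra.smul_def, mul_pow, ← map_pow, hcq] }
  have hpow : ∀ (n : ℕ) (x : F), (φ ^ n) x = x ^ q ^ n := by
    intro n
    induction n with
    | zero => intro x; simp
    | succ n ih =>
      intro x
      rw [pow_succ, Module.End.mul_apply, ih (φ x)]
      show (x ^ q) ^ q ^ n = x ^ q ^ (n + 1)
      rw [← pow_mul, ← pow_succ']
  have key : ∀ (h : K[X]) (x : F), polyAct q h x = Polynomial.aeval φ h x := by
    intro h x
    rw [Polynomial.aeval_endomorphism]
    unfold polyAct
    simp only [hpow]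
  rw [key, key, key, map_mul, Module.End.mul_apply]

lemma isGFree_mul_iff [Fintype K] [DecidableEq K] {p t q : ℕ} [Fact p.Prime] [CharP F p]
    (hq : q = p ^ t) (hK : Fintype.card K = q)
    {g G : K[X]} (hG : G ≠ 0) {α : F} :
    IsGFree q (g * G) α ↔
      IsGFree q g α ∧ ∀ e ∈ (normalizedFactors G).toFinset, IsGFree q (g * e) α := by
  constructor
  · intro h
    exact ⟨h.mono (dvd_mul_right g G), fun e he =>
      h.mono (mul_dvd_mul_left g (dvd_of_mem_normalizedFactors (Multiset.mem_toFinset.1 he)))⟩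
  · rintro ⟨h1, h2⟩ h hmonic hdvd ⟨β, hβ⟩
    by_contra hne
    have hunit : ¬IsUnit h := fun hu => hne (hmonic.eq_one_of_isUnit hu)
    obtain ⟨i, hi_irr, hi_dvd⟩ := WfDvdMonoid.exists_irreducible_factor hunit hmonic.ne_zero
    have hi0 : i ≠ 0 := hi_irr.ne_zero
    have he_monic : (normalize i).Monic := monic_normalize hi0
    have he_irr : Irreducible (normalize i) := (associated_normalize i).irreducible hi_irr
    have he_dvd_h : normalize i ∣ h := (normalize_associated i).dvd.trans hi_dvd
    obtain ⟨h', rfl⟩ := he_dvd_h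
    have hαe : α = polyAct q (normalize i) (polyAct q h' β) := by
      rw [hβ, polyAct_mul hq hK]
    have he_prime : Prime (normalize i) :=
      UniqueFactorizationMonoid.irreducible_iff_prime.1 he_irr
    have he_dvd_gG : normalize i ∣ g * G := dvd_trans (dvd_mul_right _ h') hdvd
    rcases he_prime.2.2 g G he_dvd_gG with hcase | hcase
    · exact he_irr.not_isUnit ((h1 _ he_monic hcase ⟨_, hαe⟩) ▸ isUnit_one)
    · obtain ⟨w, hw_mem, hw_assoc⟩ := exists_mem_normalizedFactors_of_dvd hG he_irr hcase
      have hw_monic : w.Monic := by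
        rw [← normalize_normalized_factor w hw_mem]
        exact monic_normalize (prime_of_normalized_factor w hw_mem).ne_zero
      have hew : normalize i = w := eq_of_monic_of_associated he_monic hw_monic hw_assoc
      have hdvd' : normalize i ∣ g * w := by rw [← hew]; exact dvd_mul_left _ g
      have : normalize i = 1 :=
        h2 w (Multiset.mem_toFinset.2 hw_mem) _ he_monic hdvd' ⟨_, hαe⟩
      exact he_irr.not_isUnit (this ▸ isUnit_one)

end GF

section Sieve

lemma forall_mem_disjSum' {α β : Type*} {s : Finset α} {t : Finset β} {Q : α ⊕ β → Prop} :
    (∀ x ∈ s.disjSum t, Q x) ↔ (∀ a ∈ s, Q (Sum.inl a)) ∧ ∀ b ∈ t, Q (Sum.inr b) := by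
  constructor
  · exact fun h => ⟨fun a ha => h _ (Finset.inl_mem_disjSum.2 ha),
      fun b hb => h _ (Finset.inr_mem_disjSum.2 hb)⟩
  · rintro ⟨h1, h2⟩ x hx
    rcases Finset.mem_disjSum.1 hx with ⟨a, ha, rfl⟩ | ⟨b, hb, rfl⟩
    exacts [h1 a ha, h2 b hb]

lemma sum_disjSum' {α β M : Type*} [AddCommMonoid M] (s : Finset α) (t : Finset β)
    (f : α ⊕ β → M) :
    ∑ x ∈ s.disjSum t, f x = (∑ a ∈ s, f (Sum.inl a)) + ∑ b ∈ t, f (Sum.inr b) := by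
  rw [← Finset.map_inl_disjUnion_map_inr, Finset.sum_disjUnion, Finset.sum_map, Finset.sum_map]
  rfl

lemma sieve_card {β ι : Type*} [DecidableEq β] (s : Finset ι) (A : ι → Finset β)
    (S T : Finset β) (hA : ∀ c ∈ s, A c ⊆ S)
    (hT : ∀ x, x ∈ T ↔ x ∈ S ∧ ∀ c ∈ s, x ∈ A c) :
    (∑ c ∈ s, ((A c).card : ℤ)) - ((s.card : ℤ) - 1) * S.card ≤ (T.card : ℤ) := by
  have hTS : T ⊆ S := fun x hx => ((hT x).1 hx).1
  have key : S \ T ⊆ s.biUnion fun c => S \ A c := by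
    intro x hx
    rcases Finset.mem_sdiff.1 hx with ⟨hxS, hxT⟩
    have hx' : ¬∀ c ∈ s, x ∈ A c := fun h => hxT ((hT x).2 ⟨hxS, h⟩)
    push_neg at hx'
    obtain ⟨c, hc, hcx⟩ := hx'
    exact Finset.mem_biUnion.2 ⟨c, hc, Finset.mem_sdiff.2 ⟨hxS, hcx⟩⟩
  have h1 : ((S \ T).card : ℤ) ≤ ∑ c ∈ s, ((S \ A c).card : ℤ) := by
    calc ((S \ T).card : ℤ) ≤ ((s.biUnion fun c => S \ A c).card : ℤ) := by
          exact_mod_cast Finset.card_le_card key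
      _ ≤ ∑ c ∈ s, ((S \ A c).card : ℤ) := by exact_mod_cast Finset.card_biUnion_le
  have e1 : ((S \ T).card : ℤ) = (S.card : ℤ) - T.card := by
    rw [Finset.card_sdiff_of_subset hTS, Nat.cast_sub (Finset.card_le_card hTS)]
  have e2 : ∑ c ∈ s, ((S \ A c).card : ℤ) = ∑ c ∈ s, ((S.card : ℤ) - (A c).card) := by
    refine Finset.sum_congr rfl fun c hc => ?_
    rw [Finset.card_sdiff_of_subset (hA c hc), Nat.cast_sub (Finset.card_le_card (hA c hc))]
  rw [e1, e2, Finset.sum_sub_distrib, Finset.sum_const, nsmul_eq_mul] at h1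
  linarith

end Sieve

/-- The defining predicate of `Ncount`. -/
def NPred {K F : Type*} [Field K] [Field F] [Fintype F] [Algebra K F]
    (q : ℕ) (f : RatFunc F) (a : K) (l₁ l₂ : ℕ) (g : K[X]) (α : F) : Prop :=
  IsUFree l₁ α ∧ IsGFree q g α ∧
    IsUFree l₂ (RatFunc.eval (RingHom.id F) α f) ∧ Algebra.trace K F α⁻¹ = a

lemma Ncount_eq_card_filter {K F : Type*} [Field K] [Field F] [Fintype F] [Algebra K F]
    (q : ℕ) (f : RatFunc F) (a : K) (l₁ l₂ : ℕ) (g : K[X]) :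
    Ncount q f a l₁ l₂ g = (Finset.univ.filter (NPred q f a l₁ l₂ g)).card := by
  have : Fintype.card {α : F // NPred q f a l₁ l₂ g α} =
      (Finset.univ.filter (NPred q f a l₁ l₂ g)).card := Fintype.card_subtype _
  rw [Ncount, Nat.card_eq_fintype_card, ← this]
  congr 1
  exact Subsingleton.elim _ _

lemma NPred_split {K F : Type*} [Field K] [DecidableEq K] [Field F]
    [Fintype K] [Fintype F] [Algebra K F]
    {p t q : ℕ} [Fact p.Prime] [CharP F p] (hq : q = p ^ t) (hK : Fintype.card K = q)
    (f : RatFunc F) (a : K) {k P : ℕ} (hP : P ≠ 0) {g G : K[X]} (hG : G ≠ 0) (α : F) :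
    NPred q f a (k * P) (k * P) (g * G) α ↔
      NPred q f a k k g α ∧
      (∀ c ∈ P.primeFactors, NPred q f a (k * c) k g α) ∧
      (∀ c ∈ P.primeFactors, NPred q f a k (k * c) g α) ∧
      (∀ e ∈ (normalizedFactors G).toFinset, NPred q f a k k (g * e) α) := by
  unfold NPred
  rw [isUFree_mul_iff hP (w := α),
    isUFree_mul_iff hP (w := RatFunc.eval (RingHom.id F) α f),
    isGFree_mul_iff hq hK hG]
  constructor
  · rintro ⟨⟨hU, hUall⟩, ⟨hG1, hGall⟩, ⟨hU2, hU2all⟩, hC⟩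
    exact ⟨⟨hU, hG1, hU2, hC⟩, fun c hc => ⟨hUall c hc, hG1, hU2, hC⟩,
      fun c hc => ⟨hU, hG1, hU2all c hc, hC⟩, fun e he => ⟨hU, hGall e he, hU2, hC⟩⟩
  · rintro ⟨⟨hU, hG1, hU2, hC⟩, h1, h2, h3⟩
    exact ⟨⟨hU, fun c hc => (h1 c hc).1⟩, ⟨hG1, fun e he => (h3 e he).2.1⟩,
      ⟨hU2, fun c hc => (h2 c hc).2.2.1⟩, hC⟩

theorem Ncount_sieve' {K F : Type*} [Field K] [DecidableEq K] [Field F]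
    [Fintype K] [Fintype F] [Algebra K F]
    (q m n : ℕ) (p t : ℕ) (hp : p.Prime) (hq : q = p ^ t) (ht : 0 < t)
    (hm : 3 ≤ m) (hn : 0 < n) (hK : Fintype.card K = q) (hF : Fintype.card F = q ^ m)
    (f : RatFunc F) (hdeg : f.num.natDegree + f.denom.natDegree = n) (a : K)
    (k P : ℕ) (hk : 0 < k) (hP : 0 < P) (hkP : Nat.Coprime k P)
    (hdvd : k * P ∣ q ^ m - 1)
    (g G : K[X]) (hdvd' : g * G ∣ X ^ m - 1) :
    ((Ncount q f a (k * P) (k * P) (g * G) : ℤ) ≥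
      (∑ c ∈ P.primeFactors, (Ncount q f a (k * c) k g : ℤ)) +
      (∑ c ∈ P.primeFactors, (Ncount q f a k (k * c) g : ℤ)) +
      (∑ e ∈ (normalizedFactors G).toFinset, (Ncount q f a k k (g * e) : ℤ)) -
      (2 * P.primeFactors.card + (normalizedFactors G).toFinset.card - 1) *
        (Ncount q f a k k g : ℤ)) := by
  haveI : Fact p.Prime := ⟨hp⟩
  haveI hcharF : CharP F p := by
    obtain ⟨nn, hn1, hn2⟩ := FiniteField.card F (ringChar F)
    have hpr : p = ringChar F := by
      have h1 : p ∣ ringChar F ^ (nn : ℕ) := by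
        rw [← hn2, hF, hq, ← pow_mul]
        exact dvd_pow_self p (Nat.mul_ne_zero ht.ne' (by omega))
      exact (Nat.prime_dvd_prime_iff_eq hp hn1).1 (hp.dvd_of_dvd_pow h1)
    rw [hpr]; exact ringChar.charP F
  have hXm : (X : K[X]) ^ m - 1 ≠ 0 := by
    have := Polynomial.X_pow_sub_C_ne_zero (R := K) (show 0 < m by omega) 1
    simpa using this
  have hgG0 : g * G ≠ 0 := ne_zero_of_dvd_ne_zero hXm hdvd'
  have hG0 : G ≠ 0 := right_ne_zero_of_mul hgG0
  -- the index set, family, base set and target set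
  let pf := P.primeFactors
  let nf := (normalizedFactors G).toFinset
  let A : (ℕ ⊕ ℕ) ⊕ K[X] → Finset F := fun c =>
    Sum.elim (Sum.elim
      (fun i => Finset.univ.filter (NPred q f a (k * i) k g))
      (fun i => Finset.univ.filter (NPred q f a k (k * i) g)))
      (fun e => Finset.univ.filter (NPred q f a k k (g * e))) c
  let sBig : Finset ((ℕ ⊕ ℕ) ⊕ K[X]) := (pf.disjSum pf).disjSum nf
  let S : Finset F := Finset.univ.filter (NPred q f a k k g)
  let T : Finset F := Finset.univ.filter (NPred q f a (k * P) (k * P) (g * G))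
  have hA : ∀ c ∈ sBig, A c ⊆ S := by
    rintro ((i | i) | e) _ x hx <;>
      simp only [A, S, Sum.elim_inl, Sum.elim_inr, Finset.mem_filter, Finset.mem_univ,
        true_and] at hx ⊢
    · exact ⟨hx.1.mono (dvd_mul_right k i), hx.2.1, hx.2.2.1, hx.2.2.2⟩
    · exact ⟨hx.1, hx.2.1, hx.2.2.1.mono (dvd_mul_right k i), hx.2.2.2⟩
    · exact ⟨hx.1, hx.2.1.mono (dvd_mul_right g e), hx.2.2.1, hx.2.2.2⟩
  have hT : ∀ x, x ∈ T ↔ x ∈ S ∧ ∀ c ∈ sBig, x ∈ A c := by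
    intro x
    simp only [T, S, sBig, A, Finset.mem_filter, Finset.mem_univ, true_and,
      forall_mem_disjSum', Sum.elim_inl, Sum.elim_inr]
    rw [NPred_split hq hK f a hP.ne' hG0 x]
    tauto
  have main := sieve_card sBig A S T hA hT
  have hsum : ∑ c ∈ sBig, ((A c).card : ℤ) =
      (∑ i ∈ pf, (((Finset.univ.filter (NPred q f a (k * i) k g)).card : ℤ))) +
      (∑ i ∈ pf, (((Finset.univ.filter (NPred q f a k (k * i) g)).card : ℤ))) +
      (∑ e ∈ nf, (((Finset.univ.filter (NPred q f a k k (g * e))).card : ℤ))) := by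
    rw [show sBig = (pf.disjSum pf).disjSum nf from rfl, sum_disjSum', sum_disjSum']
    simp only [A, Sum.elim_inl, Sum.elim_inr]
  have hcard : (sBig.card : ℤ) = (pf.card : ℤ) + pf.card + nf.card := by
    rw [show sBig = (pf.disjSum pf).disjSum nf from rfl, Finset.card_disjSum,
      Finset.card_disjSum]
    push_cast; ring
  rw [hsum, hcard] at main
  simp only [ge_iff_le, Ncount_eq_card_filter]
  push_cast
  push_cast at main
  linarith [main]

/-- The sieving inequality: for coprime `k, P` with `kP ∣ q^m − 1` and coprime divisors
`g, G` of `x^m − 1`, with `p₁,…,p_r` the prime divisors of `P` and `g₁,…,g_s` the monic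
irreducible factors of `G`,
`N(kP,kP,gG) ≥ ∑ᵢ N(kpᵢ,k,g) + ∑ᵢ N(k,kpᵢ,g) + ∑ᵢ N(k,k,g·gᵢ) − (2r+s−1)·N(k,k,g)`. -/
theorem Ncount_sieve {K F : Type*} [Field K] [DecidableEq K] [Field F]
    [Fintype K] [Fintype F] [Algebra K F]
    (q m n : ℕ) (p t : ℕ) (hp : p.Prime) (hq : q = p ^ t) (ht : 0 < t)
    (hm : 3 ≤ m) (hn : 0 < n) (hK : Fintype.card K = q) (hF : Fintype.card F = q ^ m)
    (f : RatFunc F) (hf : ¬ ExceptionalRatFunc f)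
    (hdeg : f.num.natDegree + f.denom.natDegree = n) (a : K)
    (k P : ℕ) (hk : 0 < k) (hP : 0 < P) (hkP : Nat.Coprime k P)
    (hdvd : k * P ∣ q ^ m - 1)
    (g G : K[X]) (hgG : IsCoprime g G) (hdvd' : g * G ∣ X ^ m - 1) :
    ((Ncount q f a (k * P) (k * P) (g * G) : ℤ) ≥
      (∑ c ∈ P.primeFactors, (Ncount q f a (k * c) k g : ℤ)) +
      (∑ c ∈ P.primeFactors, (Ncount q f a k (k * c) g : ℤ)) +
      (∑ e ∈ (normalizedFactors G).toFinset, (Ncount q f a k k (g * e) : ℤ)) -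
      (2 * P.primeFactors.card + (normalizedFactors G).toFinset.card - 1) *
        (Ncount q f a k k g : ℤ)) := by
  exact Ncount_sieve' q m n p t hp hq ht hm hn hK hF f hdeg a k P hk hP hkP hdvd g G hdvd'
end
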